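/- Let a_n + 1 = (p^*/p₁)^n (a_0 + 1) with p₁ < p^*, a_0 ≥ 0, and suppose a nonnegative function u on a finite measure space satisfies ‖u‖_{(a_n+1)p^*} ≤ M₁^{1/(a_n+1)} M₂^{1/√(a_n+1)} ‖u‖_{(a_{n-1}+1)p^*} for all n ≥ 1, with M₁, M₂ ≥ 1 and ‖u‖_{(a_0+1)p^*} < ∞. Then sup_n ‖u‖_{(a_n+1)p^*} < ∞ and hence u ∈ L^∞. -/

import Mathlib

open MeasureTheory ENNReal Filter Finset

/-! With `rₙ = (aₙ + 1) p*`, iterating the recursion gives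
`‖u‖_{rₙ} ≤ M₁ ^ (∑ 1/(aₖ+1)) * M₂ ^ (∑ 1/√(aₖ+1)) * ‖u‖_{r₀}`, and both exponent series
converge because `aₖ + 1` grows geometrically, so the norms are bounded by some `C`.
Since `rₙ → ∞`, Chebyshev's inequality `μ {c ≤ |u|} ≤ (C / c) ^ rₙ` then gives
`|u| ≤ c` almost everywhere for every `c > C`. -/

theorem summable_rpow_neg_geometric {r c s : ℝ} (hr : 1 < r) (hc : 0 < c) (hs : 0 < s) :
    Summable fun n : ℕ => (r ^ n * c) ^ (-s) := by
  have hr0 : 0 ≤ r := zero_le_one.trans hr.le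
  have hq : r ^ (-s) < 1 := Real.rpow_lt_one_of_one_lt_of_neg hr (neg_neg_of_pos hs)
  refine ((summable_geometric_of_lt_one (by positivity) hq).mul_right (c ^ (-s))).congr fun n => ?_
  rw [Real.mul_rpow (by positivity) hc.le, Real.rpow_pow_comm hr0]

theorem le_prod_Ioc_mul_of_le_mul {M : Type*} [CommMonoid M] [PartialOrder M]
    [MulLeftMono M] {B c : ℕ → M} (h : ∀ n, B (n + 1) ≤ c (n + 1) * B n) :
    ∀ n, B n ≤ (∏ k ∈ Ioc 0 n, c k) * B 0
  | 0 => by simp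
  | n + 1 => by
    rw [prod_Ioc_succ_top n.zero_le, mul_comm _ (c _), mul_assoc]
    exact (h n).trans (by gcongr; exact le_prod_Ioc_mul_of_le_mul h n)

theorem prod_ofReal_rpow_le_ofReal_rpow_tsum {M : ℝ} (hM : 1 ≤ M) {x : ℕ → ℝ}
    (hx0 : ∀ k, 0 ≤ x k) (hx : Summable x) (s : Finset ℕ) :
    ∏ k ∈ s, ENNReal.ofReal (M ^ x k) ≤ ENNReal.ofReal (M ^ ∑' k, x k) := by
  rw [← ENNReal.ofReal_prod_of_nonneg fun k _ => by positivity,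
    ← Real.rpow_sum_of_pos (zero_lt_one.trans_le hM)]
  exact ENNReal.ofReal_le_ofReal <|
    Real.rpow_le_rpow_of_exponent_le hM (hx.sum_le_tsum s fun k _ => hx0 k)

theorem le_ofReal_rpow_tsum_mul_of_le_ofReal_rpow_mul {B : ℕ → ℝ≥0∞} {M₁ M₂ : ℝ}
    (hM₁ : 1 ≤ M₁) (hM₂ : 1 ≤ M₂)
    {x y : ℕ → ℝ} (hx0 : ∀ k, 0 ≤ x k) (hy0 : ∀ k, 0 ≤ y k) (hx : Summable x) (hy : Summable y)
    (hB : ∀ n, B (n + 1) ≤ ENNReal.ofReal (M₁ ^ x (n + 1) * M₂ ^ y (n + 1)) * B n) (n : ℕ) :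
    B n ≤ ENNReal.ofReal (M₁ ^ ∑' k, x k) * ENNReal.ofReal (M₂ ^ ∑' k, y k) * B 0 := by
  calc B n ≤ (∏ k ∈ Ioc 0 n, ENNReal.ofReal (M₁ ^ x k * M₂ ^ y k)) * B 0 :=
        le_prod_Ioc_mul_of_le_mul hB n
    _ = (∏ k ∈ Ioc 0 n, ENNReal.ofReal (M₁ ^ x k)) *
          (∏ k ∈ Ioc 0 n, ENNReal.ofReal (M₂ ^ y k)) * B 0 := by
        simp_rw [ENNReal.ofReal_mul (Real.rpow_nonneg (zero_le_one.trans hM₁) _), prod_mul_distrib]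
    _ ≤ _ := by
        gcongr
        exacts [prod_ofReal_rpow_le_ofReal_rpow_tsum hM₁ hx0 hx _,
          prod_ofReal_rpow_le_ofReal_rpow_tsum hM₂ hy0 hy _]

namespace MeasureTheory

variable {α ε : Type*} [MeasurableSpace α] [TopologicalSpace ε] [ContinuousENorm ε]

theorem eLpNorm_top_le_of_eLpNorm_le {μ : Measure α} {f : α → ε} (hf : AEStronglyMeasurable f μ)
    {p : ℕ → ℝ} (hp_pos : ∀ n, 0 < p n) (hp : Tendsto p atTop atTop) {C : ℝ≥0∞}
    (hC : ∀ n, eLpNorm f (ENNReal.ofReal (p n)) μ ≤ C) :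
    eLpNorm f ⊤ μ ≤ C := by
  refine le_of_forall_gt_imp_ge_of_dense fun c hCc => ?_
  rcases eq_or_ne c ⊤ with rfl | hc_top
  · exact le_top
  have hc0 : c ≠ 0 := (zero_le.trans_lt hCc).ne'
  have hδ : C / c < 1 := (ENNReal.div_lt_iff (.inl hc0) (.inl hc_top)).2 (by rwa [one_mul])
  have hmeas : ∀ n, μ {x | c ≤ ‖f x‖ₑ} ≤ (C / c) ^ p n := fun n => by
    have hpn : ENNReal.ofReal (p n) ≠ 0 := by simpa using hp_pos n
    calc μ {x | c ≤ ‖f x‖ₑ}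
        ≤ c⁻¹ ^ p n * eLpNorm f (ENNReal.ofReal (p n)) μ ^ p n := by
          simpa [(hp_pos n).le] using
            meas_ge_le_mul_pow_eLpNorm_enorm μ hpn ofReal_ne_top hf hc0 (absurd · hc_top)
      _ ≤ c⁻¹ ^ p n * C ^ p n := by gcongr; exacts [(hp_pos n).le, hC n]
      _ = (C / c) ^ p n := by
          rw [ENNReal.div_eq_inv_mul, ENNReal.mul_rpow_of_nonneg _ _ (hp_pos n).le, mul_comm]
  have hnull : μ {x | c ≤ ‖f x‖ₑ} = 0 :=
    le_zero_iff.1 <| ge_of_tendsto' ((ENNReal.tendsto_rpow_atTop_of_base_lt_one hδ).comp hp) hmeas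
  rw [eLpNorm_exponent_top]
  refine essSup_le_of_ae_le c ?_
  filter_upwards [measure_eq_zero_iff_ae_notMem.1 hnull] with x hx
  exact (not_le.1 hx).le

end MeasureTheory

theorem stmt17_general {X : Type*} [MeasurableSpace X] (μ : Measure X)
    (u : X → ℝ) (hu : Measurable u)
    (p₁ pstar : ℝ) (hp₁ : 0 < p₁) (hpp : p₁ < pstar)
    (a : ℕ → ℝ) (ha0 : 0 ≤ a 0)
    (ha : ∀ n : ℕ, a n + 1 = (pstar / p₁) ^ n * (a 0 + 1))
    (M₁ M₂ : ℝ) (hM₁ : 1 ≤ M₁) (hM₂ : 1 ≤ M₂)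
    (hfin : eLpNorm u (ENNReal.ofReal ((a 0 + 1) * pstar)) μ < ⊤)
    (hrec : ∀ n : ℕ,
      eLpNorm u (ENNReal.ofReal ((a (n + 1) + 1) * pstar)) μ
        ≤ ENNReal.ofReal (M₁ ^ (1 / (a (n + 1) + 1)) *
              M₂ ^ (1 / Real.sqrt (a (n + 1) + 1))) *
            eLpNorm u (ENNReal.ofReal ((a n + 1) * pstar)) μ) :
    (∃ C : ℝ≥0∞, C < ⊤ ∧
        ∀ n : ℕ, eLpNorm u (ENNReal.ofReal ((a n + 1) * pstar)) μ ≤ C) ∧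
      MemLp u ⊤ μ := by
  have hr : 1 < pstar / p₁ := (one_lt_div hp₁).2 hpp
  have hps : 0 < pstar := hp₁.trans hpp
  have ha0' : 0 < a 0 + 1 := by linarith
  have hpos : ∀ n, 0 < a n + 1 := fun n => by rw [ha n]; positivity
  have hx : Summable fun n => 1 / (a n + 1) :=
    (summable_rpow_neg_geometric hr ha0' one_pos).congr fun n => by
      rw [← ha n, Real.rpow_neg_one, one_div]
  have hy : Summable fun n => 1 / Real.sqrt (a n + 1) :=
    (summable_rpow_neg_geometric hr ha0' one_half_pos).congr fun n => by
      rw [← ha n, Real.rpow_neg (hpos n).le, Real.sqrt_eq_rpow, inv_eq_one_div]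
  obtain ⟨C, hC_lt_top, hC⟩ : ∃ C < ⊤,
      ∀ n, eLpNorm u (ENNReal.ofReal ((a n + 1) * pstar)) μ ≤ C :=
    ⟨_, by finiteness, le_ofReal_rpow_tsum_mul_of_le_ofReal_rpow_mul hM₁ hM₂
      (fun n => (one_div_pos.2 (hpos n)).le)
      (fun n => (one_div_pos.2 (Real.sqrt_pos.2 (hpos n))).le) hx hy hrec⟩
  refine ⟨⟨C, hC_lt_top, hC⟩, hu.aestronglyMeasurable, ?_⟩
  have hp : Tendsto (fun n => (a n + 1) * pstar) atTop atTop :=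
    (((tendsto_pow_atTop_atTop_of_one_lt hr).atTop_mul_const ha0').atTop_mul_const hps).congr
      fun n => by rw [ha n]
  exact (eLpNorm_top_le_of_eLpNorm_le hu.aestronglyMeasurable
    (fun n => mul_pos (hpos n) hps) hp hC).trans_lt hC_lt_top

theorem stmt17 {X : Type*} [MeasurableSpace X] (μ : Measure X) [IsFiniteMeasure μ]
    (u : X → ℝ) (hu : Measurable u) (hunn : ∀ x, 0 ≤ u x)
    (p₁ pstar : ℝ) (hp₁ : 0 < p₁) (hpp : p₁ < pstar)
    (a : ℕ → ℝ) (ha0 : 0 ≤ a 0)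
    (ha : ∀ n : ℕ, a n + 1 = (pstar / p₁) ^ n * (a 0 + 1))
    (M₁ M₂ : ℝ) (hM₁ : 1 ≤ M₁) (hM₂ : 1 ≤ M₂)
    (hfin : eLpNorm u (ENNReal.ofReal ((a 0 + 1) * pstar)) μ < ⊤)
    (hrec : ∀ n : ℕ,
      eLpNorm u (ENNReal.ofReal ((a (n + 1) + 1) * pstar)) μ
        ≤ ENNReal.ofReal (M₁ ^ (1 / (a (n + 1) + 1)) *
              M₂ ^ (1 / Real.sqrt (a (n + 1) + 1))) *
            eLpNorm u (ENNReal.ofReal ((a n + 1) * pstar)) μ) :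
    (∃ C : ℝ≥0∞, C < ⊤ ∧
        ∀ n : ℕ, eLpNorm u (ENNReal.ofReal ((a n + 1) * pstar)) μ ≤ C) ∧
      MemLp u ⊤ μ :=
  stmt17_general μ u hu p₁ pstar hp₁ hpp a ha0 ha M₁ M₂ hM₁ hM₂ hfin hrec
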